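/- For each fixed pair of nonnegative integers k ≤ n, the map b ↦ α_{k,n}^{(b)} := [u^{n-k}] (u/h_b(u))^{n+1} (for integer b ≥ 1) agrees with a polynomial in b of degree at most 2(n-k). -/

import Mathlib

open PowerSeries

/-- The power series `h_b(u)/u = ∑_{i=0}^{b-1} ((-1)^i/b) binom(b,i+1) binom(b,i) u^i`,
where `h_b(u) = ∑_{j=1}^{b} ((-1)^{j-1}/b) binom(b,j) binom(b,j-1) u^j`. For `b ≥ 1` it has
constant term `1`, so that `u/h_b(u) = (hDivU b)⁻¹` is a well-defined formal power series. -/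
noncomputable def hDivU (b : ℕ) : PowerSeries ℚ :=
  ∑ i ∈ Finset.range b,
    PowerSeries.C ((-1 : ℚ) ^ i / b * (Nat.choose b (i + 1)) * (Nat.choose b i)) *
      PowerSeries.X ^ i

/-- Coefficient extraction `[u^d] F` for an integer index `d`, with the convention that
`[u^d] F = 0` for `d < 0`. -/
noncomputable def coeffZ (d : ℤ) (F : PowerSeries ℚ) : ℚ :=
  if 0 ≤ d then PowerSeries.coeff d.toNat F else 0

/-- `α_{k,n}^{(b)} = [u^{n-k}] (u/h_b(u))^{n+1}`. -/
noncomputable def alphaC (b k n : ℕ) : ℚ :=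
  coeffZ ((n : ℤ) - (k : ℤ)) ((hDivU b)⁻¹ ^ (n + 1))

/-! The coefficient `((-1)^i/b) binom(b,i+1) binom(b,i)` of `h_b(u)/u` is the value at `b` of a
polynomial of degree `2i`, so `h_b(u)/u` is the specialisation at `b` of a single power series `H`
over `ℚ[b]` whose `u^m`-coefficient has degree at most `2m`. Such series form a subsemiring that is
closed under inversion, because the recursion for the coefficients of `H⁻¹` only multiplies
coefficients whose indices add up to `m`. Specialisation commutes with inversion and powers, so
`[u^{n-k}] H^{-(n+1)}` is the required polynomial. -/

namespace PowerSeries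

def coeffNatDegreeLE (R : Type*) [Semiring R] (d : ℕ) :
    Subsemiring (PowerSeries (Polynomial R)) where
  carrier := {F | ∀ m, (coeff m F).natDegree ≤ d * m}
  zero_mem' m := by simp
  one_mem' m := by
    rw [coeff_one]
    split_ifs <;> simp
  add_mem' {F G} hF hG m := by
    rw [map_add]
    exact (Polynomial.natDegree_add_le _ _).trans (max_le (hF m) (hG m))
  mul_mem' {F G} hF hG m := by
    rw [coeff_mul]
    refine Polynomial.natDegree_sum_le_of_forall_le _ _ fun p hp => ?_
    rw [Finset.HasAntidiagonal.mem_antidiagonal] at hp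
    exact (Polynomial.natDegree_mul_le_of_le (hF p.1) (hG p.2)).trans (by rw [← mul_add, hp])

theorem invOfUnit_one_mem_coeffNatDegreeLE {R : Type*} [Ring R] {d : ℕ}
    {F : PowerSeries (Polynomial R)} (hF : F ∈ coeffNatDegreeLE R d) :
    invOfUnit F 1 ∈ coeffNatDegreeLE R d := by
  intro m
  induction m using Nat.strong_induction_on with
  | _ m ih =>
    rw [coeff_invOfUnit]
    split_ifs with hm
    · simp
    simp only [inv_one, Units.val_one, neg_mul, one_mul, Polynomial.natDegree_neg]
    refine Polynomial.natDegree_sum_le_of_forall_le _ _ fun p hp => ?_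
    rw [Finset.HasAntidiagonal.mem_antidiagonal] at hp
    split_ifs with hlt
    · exact (Polynomial.natDegree_mul_le_of_le (hF p.1) (ih p.2 hlt)).trans
        (by rw [← mul_add, hp])
    · simp

theorem map_invOfUnit_one {S k : Type*} [Ring S] [Field k] (f : S →+* k) {F : PowerSeries S}
    (hF : constantCoeff F = 1) : map f (invOfUnit F 1) = (map f F)⁻¹ := by
  have hF' : constantCoeff (map f F) ≠ 0 := by
    rw [← coeff_zero_eq_constantCoeff_apply, coeff_map, coeff_zero_eq_constantCoeff_apply, hF,
      map_one]
    exact one_ne_zero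
  rw [eq_inv_iff_mul_eq_one hF', ← map_mul, invOfUnit_mul F 1 (by simp [hF]), map_one]

end PowerSeries

-- `binom(b,i+1) binom(b,i) / b = (b-1)(b-2)⋯(b-i) · b(b-1)⋯(b-i+1) / ((i+1)! i!)`
noncomputable def hDivUCoeff (i : ℕ) : Polynomial ℚ :=
  Polynomial.C ((-1 : ℚ) ^ i / ((i + 1).factorial * i.factorial)) *
    (descPochhammer ℚ i).comp (Polynomial.X - 1) * descPochhammer ℚ i
theorem natDegree_hDivUCoeff_le (i : ℕ) : (hDivUCoeff i).natDegree ≤ 2 * i := by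
  have hshift : ((descPochhammer ℚ i).comp (Polynomial.X - 1)).natDegree = i := by
    rw [Polynomial.natDegree_comp, descPochhammer_natDegree, ← map_one Polynomial.C,
      Polynomial.natDegree_X_sub_C, mul_one]
  calc (hDivUCoeff i).natDegree ≤ i + i := by
        refine Polynomial.natDegree_mul_le_of_le ?_ (descPochhammer_natDegree ℚ i).le
        exact (Polynomial.natDegree_C_mul_le _ _).trans hshift.le
    _ = 2 * i := by ring

theorem eval_hDivUCoeff (i c : ℕ) :
    (hDivUCoeff i).eval ((c + 1 : ℕ) : ℚ) =
      (-1 : ℚ) ^ i / (c + 1 : ℕ) * (c + 1).choose (i + 1) * (c + 1).choose i := by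
  have hc : (((c + 1 : ℕ) : ℚ) - 1) = c := by push_cast; ring
  have hpascal : (c.choose i : ℚ) = (c + 1).choose (i + 1) * (i + 1) / (c + 1) := by
    rw [eq_div_iff (by positivity)]
    exact_mod_cast (mul_comm _ _).trans (Nat.add_one_mul_choose_eq c i)
  simp only [hDivUCoeff, Polynomial.eval_mul, Polynomial.eval_C, Polynomial.eval_comp,
    Polynomial.eval_sub, Polynomial.eval_X, Polynomial.eval_one, hc]
  rw [descPochhammer_eval_eq_descFactorial, descPochhammer_eval_eq_descFactorial,
    Nat.descFactorial_eq_factorial_mul_choose, Nat.descFactorial_eq_factorial_mul_choose,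
    Nat.factorial_succ]
  push_cast
  rw [hpascal]
  field_simp

theorem coeff_hDivU (b i : ℕ) :
    coeff i (hDivU b) = (-1 : ℚ) ^ i / b * b.choose (i + 1) * b.choose i := by
  simp only [hDivU, map_sum, coeff_C_mul_X_pow, Finset.sum_ite_eq, Finset.mem_range]
  split_ifs with hi
  · rfl
  · rw [Nat.choose_eq_zero_of_lt (by omega : b < i + 1)]
    simp

noncomputable def hDivUPoly : PowerSeries (Polynomial ℚ) := mk hDivUCoeff

theorem hDivUPoly_mem_coeffNatDegreeLE : hDivUPoly ∈ coeffNatDegreeLE ℚ 2 := by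
  intro m
  simpa only [hDivUPoly, coeff_mk] using natDegree_hDivUCoeff_le m

theorem constantCoeff_hDivUPoly : constantCoeff hDivUPoly = 1 := by
  simp [hDivUPoly, ← coeff_zero_eq_constantCoeff_apply, hDivUCoeff]

theorem map_eval_hDivUPoly (c : ℕ) :
    map (Polynomial.evalRingHom ((c + 1 : ℕ) : ℚ)) hDivUPoly = hDivU (c + 1) := by
  ext i
  rw [coeff_map, hDivUPoly, coeff_mk, coeff_hDivU, Polynomial.coe_evalRingHom, eval_hDivUCoeff]

theorem stmt13 (k n : ℕ) (hkn : k ≤ n) :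
    ∃ P : Polynomial ℚ, P.natDegree ≤ 2 * (n - k) ∧
      ∀ b : ℕ, 1 ≤ b → Polynomial.eval (b : ℚ) P = alphaC b k n := by
  refine ⟨coeff (n - k) (invOfUnit hDivUPoly 1 ^ (n + 1)),
    pow_mem (invOfUnit_one_mem_coeffNatDegreeLE hDivUPoly_mem_coeffNatDegreeLE) _ _, ?_⟩
  intro b hb
  obtain ⟨c, rfl⟩ := Nat.exists_eq_add_of_le' hb
  have hnk : ((n : ℤ) - k).toNat = n - k := by omega
  rw [alphaC, coeffZ, if_pos (by omega), hnk, ← map_eval_hDivUPoly,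
    ← map_invOfUnit_one _ constantCoeff_hDivUPoly, ← map_pow, coeff_map]
  rfl
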